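/- Let q ∈ ℂ with 0 < |q| < 1. For n, l ∈ ℤ and m, k ∈ ℕ define the operator ⟨n,m,k,l⟩ on H by ⟨n,m,k,l⟩ = Aⁿ Bᵐ (B*)ᵏ Dˡ if n ≥ 0 and ⟨n,m,k,l⟩ = (A*)^{−n} Bᵐ (B*)ᵏ Dˡ if n < 0, where Dˡ := (D*)^{−l} for l < 0. Then h(⟨n,m,k,l⟩) = (1−|q|²)/(1−|q|^{2(m+1)}) if m = k and n = l = 0, and h(⟨n,m,k,l⟩) = 0 otherwise. -/

import Mathlib

open scoped ComplexConjugate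

noncomputable section

/-- The Hilbert space `H = ℓ²(ℕ × ℤ × ℤ)` over `ℂ`. -/
abbrev H : Type := lp (fun _ : ℕ × ℤ × ℤ => ℂ) 2

/-- The standard orthonormal basis vectors of `H`. -/
noncomputable def e (i : ℕ × ℤ × ℤ) : H := lp.single 2 i 1

/-- The Haar state `h(x) = (1-|q|²) Σ_{n≥0} |q|^{2n} ⟨e_{n,0,0}, x e_{n,0,0}⟩`. -/
noncomputable def haar (q : ℂ) (x : H →L[ℂ] H) : ℂ :=
  (1 - (‖q‖ : ℂ) ^ 2) *
    ∑' n : ℕ, ((‖q‖ : ℂ) ^ (2 * n)) *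
      inner (𝕜 := ℂ) (e (n, 0, 0)) (x (e (n, 0, 0)))

/-- The basis element `⟨n,m,k,l⟩` of `𝒪(U_q(2))` in the defining representation. -/
noncomputable def word (A B D : H →L[ℂ] H) (n : ℤ) (m k : ℕ) (l : ℤ) : H →L[ℂ] H :=
  (if 0 ≤ n then A ^ n.toNat else (star A) ^ (-n).toNat) * B ^ m * (star B) ^ k *
    (if 0 ≤ l then D ^ l.toNat else (star D) ^ (-l).toNat)

namespace Stmt4Aux

lemma e_apply (i j : ℕ × ℤ × ℤ) : (e j : ∀ _ : ℕ × ℤ × ℤ, ℂ) i = if i = j then 1 else 0 := by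
  by_cases h : i = j
  · subst h; rw [if_pos rfl]; exact lp.single_apply_self _ _ _
  · rw [if_neg h]; exact lp.single_apply_ne _ _ _ h

lemma inner_e (i : ℕ × ℤ × ℤ) (x : H) : (inner ℂ (e i) x : ℂ) = x i := by
  rw [e, lp.inner_single_left]
  simp [RCLike.inner_apply]

lemma inner_e_e (i j : ℕ × ℤ × ℤ) : (inner ℂ (e i) (e j) : ℂ) = if i = j then 1 else 0 := by
  rw [inner_e, e_apply]

lemma ext_of_coords (x y : H) (h : ∀ i, (inner ℂ (e i) x : ℂ) = inner ℂ (e i) y) : x = y :=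
  lp.ext (funext fun i => by rw [← inner_e, ← inner_e, h])

end Stmt4Aux

namespace Stmt4Aux

variable {q : ℂ} {A B D : H →L[ℂ] H}

lemma starB_apply (hB : ∀ (n : ℕ) (r s : ℤ), B (e (n, r, s)) = (q ^ n) • e (n, r + 1, s)) :
    ∀ (n : ℕ) (r s : ℤ), (star B) (e (n, r, s)) = (conj q ^ n) • e (n, r - 1, s) := by
  intro n r s
  apply ext_of_coords
  rintro ⟨n', r', s'⟩
  rw [ContinuousLinearMap.star_eq_adjoint, ContinuousLinearMap.adjoint_inner_right, hB,
    inner_smul_left, inner_smul_right, inner_e_e, inner_e_e]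
  simp only [Prod.mk.injEq]
  by_cases h : n' = n ∧ r' = r - 1 ∧ s' = s
  · obtain ⟨rfl, rfl, rfl⟩ := h
    rw [if_pos ⟨rfl, by omega, rfl⟩, if_pos ⟨rfl, rfl, rfl⟩, map_pow]
  · rw [if_neg h, if_neg (fun hc => h ⟨hc.1, by omega, hc.2.2⟩), mul_zero, mul_zero]

lemma starD_apply
    (hD : ∀ (n : ℕ) (r s : ℤ), D (e (n, r, s)) =
      ((conj q / (‖q‖ : ℂ)) ^ (2 * r)) • e (n, r, s + 1)) :
    ∀ (n : ℕ) (s : ℤ), (star D) (e (n, 0, s)) = e (n, 0, s - 1) := by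
  intro n s
  apply ext_of_coords
  rintro ⟨n', r', s'⟩
  rw [ContinuousLinearMap.star_eq_adjoint, ContinuousLinearMap.adjoint_inner_right, hD,
    inner_smul_left, inner_e_e, inner_e_e]
  simp only [Prod.mk.injEq]
  by_cases h : n' = n ∧ r' = 0 ∧ s' = s - 1
  · obtain ⟨rfl, rfl, rfl⟩ := h
    rw [if_pos ⟨rfl, rfl, by omega⟩, if_pos ⟨rfl, rfl, rfl⟩]
    norm_num
  · rw [if_neg h, if_neg (fun hc => h ⟨hc.1, hc.2.1, by omega⟩), mul_zero]

lemma starA_zero (hA : ∀ (n : ℕ) (r s : ℤ), A (e (n, r, s)) =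
      ((Real.sqrt (1 - ‖q‖ ^ (2 * (n + 1))) : ℝ) : ℂ) • e (n + 1, r, s)) :
    ∀ (r s : ℤ), (star A) (e (0, r, s)) = 0 := by
  intro r s
  apply ext_of_coords
  rintro ⟨n', r', s'⟩
  rw [ContinuousLinearMap.star_eq_adjoint, ContinuousLinearMap.adjoint_inner_right, hA,
    inner_smul_left, inner_e_e]
  rw [if_neg (by simp [Prod.ext_iff]), mul_zero, inner_zero_right]

lemma starA_succ (hA : ∀ (n : ℕ) (r s : ℤ), A (e (n, r, s)) =
      ((Real.sqrt (1 - ‖q‖ ^ (2 * (n + 1))) : ℝ) : ℂ) • e (n + 1, r, s)) :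
    ∀ (n : ℕ) (r s : ℤ), (star A) (e (n + 1, r, s)) =
      ((Real.sqrt (1 - ‖q‖ ^ (2 * (n + 1))) : ℝ) : ℂ) • e (n, r, s) := by
  intro n r s
  apply ext_of_coords
  rintro ⟨n', r', s'⟩
  rw [ContinuousLinearMap.star_eq_adjoint, ContinuousLinearMap.adjoint_inner_right, hA,
    inner_smul_left, inner_smul_right, inner_e_e, inner_e_e]
  simp only [Prod.mk.injEq]
  by_cases h : n' = n ∧ r' = r ∧ s' = s
  · obtain ⟨rfl, rfl, rfl⟩ := h
    rw [if_pos ⟨rfl, rfl, rfl⟩, if_pos ⟨rfl, rfl, rfl⟩, Complex.conj_ofReal]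
  · rw [if_neg (fun hc => h ⟨by omega, hc.2⟩), if_neg h, mul_zero, mul_zero]

end Stmt4Aux

namespace Stmt4Aux

variable {q : ℂ} {A B D : H →L[ℂ] H}

lemma Bpow (hB : ∀ (n : ℕ) (r s : ℤ), B (e (n, r, s)) = (q ^ n) • e (n, r + 1, s)) :
    ∀ (p : ℕ) (n : ℕ) (r s : ℤ), (B ^ p) (e (n, r, s)) = (q ^ (n * p)) • e (n, r + p, s) := by
  intro p
  induction p with
  | zero => intro n r s; simp
  | succ p ih =>
    intro n r s
    rw [pow_succ, ContinuousLinearMap.mul_apply, hB, map_smul, ih]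
    rw [smul_smul, ← pow_add]
    rw [show n + n * p = n * (p + 1) by ring]
    congr 2
    push_cast; ring

lemma starBpow (hB : ∀ (n : ℕ) (r s : ℤ), B (e (n, r, s)) = (q ^ n) • e (n, r + 1, s)) :
    ∀ (p : ℕ) (n : ℕ) (r s : ℤ),
      ((star B) ^ p) (e (n, r, s)) = (conj q ^ (n * p)) • e (n, r - p, s) := by
  intro p
  induction p with
  | zero => intro n r s; simp
  | succ p ih =>
    intro n r s
    rw [pow_succ, ContinuousLinearMap.mul_apply, starB_apply hB, map_smul, ih]
    rw [smul_smul, ← pow_add]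
    rw [show n + n * p = n * (p + 1) by ring]
    congr 2
    push_cast; ring

lemma Dpow (hD : ∀ (n : ℕ) (r s : ℤ), D (e (n, r, s)) =
      ((conj q / (‖q‖ : ℂ)) ^ (2 * r)) • e (n, r, s + 1)) :
    ∀ (p : ℕ) (n : ℕ) (s : ℤ), (D ^ p) (e (n, 0, s)) = e (n, 0, s + p) := by
  intro p
  induction p with
  | zero => intro n s; simp
  | succ p ih =>
    intro n s
    rw [pow_succ, ContinuousLinearMap.mul_apply, hD]
    norm_num [ih]
    congr 2
    push_cast; ring

lemma starDpow (hD : ∀ (n : ℕ) (r s : ℤ), D (e (n, r, s)) =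
      ((conj q / (‖q‖ : ℂ)) ^ (2 * r)) • e (n, r, s + 1)) :
    ∀ (p : ℕ) (n : ℕ) (s : ℤ), ((star D) ^ p) (e (n, 0, s)) = e (n, 0, s - p) := by
  intro p
  induction p with
  | zero => intro n s; simp
  | succ p ih =>
    intro n s
    rw [pow_succ, ContinuousLinearMap.mul_apply, starD_apply hD, ih]
    congr 2
    push_cast; ring

lemma Apow (hA : ∀ (n : ℕ) (r s : ℤ), A (e (n, r, s)) =
      ((Real.sqrt (1 - ‖q‖ ^ (2 * (n + 1))) : ℝ) : ℂ) • e (n + 1, r, s)) :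
    ∀ (p : ℕ) (n : ℕ) (r s : ℤ), ∃ c : ℂ, (A ^ p) (e (n, r, s)) = c • e (n + p, r, s) := by
  intro p
  induction p with
  | zero => intro n r s; exact ⟨1, by simp⟩
  | succ p ih =>
    intro n r s
    rw [pow_succ, ContinuousLinearMap.mul_apply, hA, map_smul]
    obtain ⟨c, hc⟩ := ih (n + 1) r s
    rw [show n + 1 + p = n + (p + 1) by omega] at hc
    exact ⟨((Real.sqrt (1 - ‖q‖ ^ (2 * (n + 1))) : ℝ) : ℂ) * c, by rw [hc, smul_smul]⟩

lemma starApow (hA : ∀ (n : ℕ) (r s : ℤ), A (e (n, r, s)) =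
      ((Real.sqrt (1 - ‖q‖ ^ (2 * (n + 1))) : ℝ) : ℂ) • e (n + 1, r, s)) :
    ∀ (p : ℕ) (n : ℕ) (r s : ℤ), ((star A) ^ p) (e (n, r, s)) = 0 ∨
      (p ≤ n ∧ ∃ c : ℂ, ((star A) ^ p) (e (n, r, s)) = c • e (n - p, r, s)) := by
  intro p
  induction p with
  | zero => intro n r s; exact Or.inr ⟨Nat.zero_le _, 1, by simp⟩
  | succ p ih =>
    intro n r s
    rw [pow_succ, ContinuousLinearMap.mul_apply]
    cases n with
    | zero => left; rw [starA_zero hA, map_zero]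
    | succ n =>
      rw [starA_succ hA, map_smul]
      rcases ih n r s with h | ⟨hle, c, hc⟩
      · left; rw [h, smul_zero]
      · right
        rw [show n - p = n + 1 - (p + 1) by omega] at hc
        exact ⟨by omega, ((Real.sqrt (1 - ‖q‖ ^ (2 * (n + 1))) : ℝ) : ℂ) * c,
          by rw [hc, smul_smul]⟩

end Stmt4Aux

section Main

open Stmt4Aux

/-- values of the Haar state on the basis `⟨n,m,k,l⟩` of `𝒪(U_q(2))`. -/
theorem stmt4 (q : ℂ) (hq0 : 0 < ‖q‖) (hq1 : ‖q‖ < 1)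
    (A B D : H →L[ℂ] H)
    (hA : ∀ (n : ℕ) (r s : ℤ), A (e (n, r, s)) =
      ((Real.sqrt (1 - ‖q‖ ^ (2 * (n + 1))) : ℝ) : ℂ) • e (n + 1, r, s))
    (hB : ∀ (n : ℕ) (r s : ℤ), B (e (n, r, s)) = (q ^ n) • e (n, r + 1, s))
    (hD : ∀ (n : ℕ) (r s : ℤ), D (e (n, r, s)) =
      ((conj q / (‖q‖ : ℂ)) ^ (2 * r)) • e (n, r, s + 1)) :
    ∀ (n : ℤ) (m k : ℕ) (l : ℤ),
      haar q (word A B D n m k l) =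
        if m = k ∧ n = 0 ∧ l = 0 then
          (((1 - ‖q‖ ^ 2) / (1 - ‖q‖ ^ (2 * (m + 1))) : ℝ) : ℂ)
        else 0 := by
  intro nn m k l
  have key : ∀ n : ℕ, (inner (𝕜 := ℂ) (e (n, 0, 0)) (word A B D nn m k l (e (n, 0, 0))))
      = if m = k ∧ nn = 0 ∧ l = 0 then ((‖q‖ : ℂ) ^ 2) ^ (n * m) else 0 := by
    intro n
    rw [word]
    simp only [ContinuousLinearMap.mul_apply]
    have hY : (if 0 ≤ l then D ^ l.toNat else (star D) ^ (-l).toNat) (e (n, 0, 0))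
        = e (n, 0, l) := by
      split_ifs with hl
      · rw [Dpow hD, show (0 : ℤ) + (l.toNat : ℤ) = l by omega]
      · rw [starDpow hD, show (0 : ℤ) - ((-l).toNat : ℤ) = l by omega]
    rw [hY, starBpow hB, map_smul, Bpow hB, map_smul, map_smul]
    rcases lt_trichotomy nn 0 with hnn | hnn | hnn
    · rw [if_neg (not_le.2 hnn)]
      rcases starApow hA (-nn).toNat n (0 - (k : ℤ) + m) l with h0 | ⟨hle, c, hc⟩
      · rw [h0, smul_zero, smul_zero, inner_zero_right,
          if_neg (fun hcon => by omega)]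
      · rw [hc, inner_smul_right, inner_smul_right, inner_smul_right, inner_e_e,
          if_neg (fun hcon => by
            have h1 : (1 : ℤ) ≤ -nn := by omega
            have : n = n - (-nn).toNat := congrArg Prod.fst hcon
            omega),
          mul_zero, mul_zero, mul_zero, if_neg (fun hcon => by omega)]
    · subst hnn
      norm_num
      rw [inner_e_e]
      by_cases hmk : m = k ∧ l = 0
      · obtain ⟨rfl, rfl⟩ := hmk
        rw [if_pos (by norm_num), if_pos (by norm_num)]
        rw [mul_one, ← mul_pow, mul_comm ((starRingEnd ℂ) q), Complex.mul_conj,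
          Complex.normSq_eq_norm_sq]
        push_cast
        ring
      · rw [if_neg (fun hcon => by
            simp only [Prod.ext_iff, Prod.fst_zero, Prod.snd_zero] at hcon
            exact hmk ⟨by omega, hcon.2.2.symm⟩),
          mul_zero, mul_zero, if_neg (by tauto)]
    · rw [if_pos hnn.le]
      obtain ⟨c, hc⟩ := Apow hA nn.toNat n (0 - (k : ℤ) + m) l
      rw [hc, inner_smul_right, inner_smul_right, inner_smul_right, inner_e_e,
        if_neg (fun hcon => by
          have : n = n + nn.toNat := congrArg Prod.fst hcon
          omega),
        mul_zero, mul_zero, mul_zero, if_neg (fun hcon => by omega)]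
  rw [haar]
  by_cases hcond : m = k ∧ nn = 0 ∧ l = 0
  · rw [if_pos hcond]
    have hterm : ∀ n : ℕ, ((‖q‖ : ℂ) ^ (2 * n)) *
        inner (𝕜 := ℂ) (e (n, 0, 0)) (word A B D nn m k l (e (n, 0, 0)))
        = (((‖q‖ : ℂ) ^ 2) ^ (m + 1)) ^ n := by
      intro n
      rw [key n, if_pos hcond, ← pow_mul, ← pow_mul, ← pow_mul, ← pow_add]
      congr 1
      ring
    rw [tsum_congr hterm, tsum_geometric_of_norm_lt_one (by
      rw [norm_pow, norm_pow, Complex.norm_real, Real.norm_eq_abs,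
        abs_of_nonneg hq0.le]
      calc (‖q‖ ^ 2) ^ (m + 1) < 1 ^ (m + 1) :=
            pow_lt_pow_left₀ (by nlinarith) (by positivity) (by omega)
        _ = 1 := one_pow _)]
    rw [Complex.ofReal_div]
    rw [div_eq_mul_inv]
    push_cast
    rw [pow_mul]
  · rw [if_neg hcond]
    have hterm : ∀ n : ℕ, ((‖q‖ : ℂ) ^ (2 * n)) *
        inner (𝕜 := ℂ) (e (n, 0, 0)) (word A B D nn m k l (e (n, 0, 0))) = 0 := by
      intro n
      rw [key n, if_neg hcond, mul_zero]
    rw [tsum_congr hterm, tsum_zero, mul_zero]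

end Main
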